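/- For every s ≥ 0 and every τ > 0 there exists C > 0 with the following property: for all complex sequences (c_k)_{k∈ℤ}, (d_k)_{k∈ℤ} with Σ_k (1+k²)^s ((1+k²)|c_k|² + |d_k|²) < ∞, the solutions v_k of the homogeneous mode ODEs v_k''(t) + (k² − 2ik)v_k'(t) − ik³ v_k(t) = 0 with v_k(0) = c_k and v_k'(0) = d_k satisfy sup_{0≤t≤τ} Σ_k (1+k²)^s ((1+k²)|v_k(t)|² + |v_k'(t)|²) ≤ C · Σ_k (1+k²)^s ((1+k²)|c_k|² + |d_k|²). -/

import Mathlib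

open Set Complex

lemma inner_mul_self_re (a z : ℂ) : (inner ℝ z (a*z) : ℝ) = a.re * ‖z‖^2 := by
  simp [RCLike.inner_apply, Complex.mul_re, Complex.mul_im, 
    Complex.sq_norm, Complex.normSq_apply]
  ring

lemma inner_real_mul (r : ℝ) (z y : ℂ) : (inner ℝ z ((r:ℂ)*y) : ℝ) = r * (inner ℝ z y : ℝ) := by
  rw [← Complex.real_smul, real_inner_smul_right]

/-- Per-mode energy bound, uniform in `k`. -/
lemma mode_energy_bound (τ : ℝ) (k : ℤ) (v w : ℝ → ℂ)
    (hv : ∀ t, HasDerivAt v (w t) t)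
    (hw : ∀ t, HasDerivAt w
      (-((k:ℂ)^2 - 2*Complex.I*(k:ℂ)) * w t + Complex.I * (k:ℂ)^3 * v t) t)
    (t : ℝ) (ht0 : 0 ≤ t) (htτ : t ≤ τ) :
    (1 + (k:ℝ)^2) * ‖v t‖^2 + ‖w t‖^2
      ≤ 9 * Real.exp τ * ((1 + (k:ℝ)^2) * ‖v 0‖^2 + ‖w 0‖^2) := by
  set K : ℂ := (k:ℂ) with hK
  have hKr : K = ((k:ℝ):ℂ) := by push_cast [hK]; ring
  set u : ℝ → ℂ := fun t => w t - Complex.I * K * v t with hu_def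
  have hu : ∀ t, HasDerivAt u (-(K^2 - Complex.I*K) * u t - K^2 * v t) t := by
    intro t
    have h1 : HasDerivAt (fun y => w y - Complex.I * K * v y) _ t := (hw t).sub ((hv t).const_mul (Complex.I * K))
    convert h1 using 1
    simp only [hu_def]
    ring_nf
    rw [Complex.I_sq]
    ring
  -- modified energy
  set h : ℝ → ℝ := fun t => (1 + (k:ℝ)^2) * ‖v t‖^2 + ‖u t‖^2 with hh_def
  have hh : ∀ t, HasDerivAt h
      ((1 + (k:ℝ)^2) * (2 * (inner ℝ (v t) (w t) : ℝ))
        + 2 * (inner ℝ (u t) (-(K^2 - Complex.I*K) * u t - K^2 * v t) : ℝ)) t := by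
    intro t
    exact (((hv t).norm_sq).const_mul ((1:ℝ) + (k:ℝ)^2)).add ((hu t).norm_sq)
  -- the derivative is ≤ h
  have hd_le : ∀ t, (1 + (k:ℝ)^2) * (2 * (inner ℝ (v t) (w t) : ℝ))
        + 2 * (inner ℝ (u t) (-(K^2 - Complex.I*K) * u t - K^2 * v t) : ℝ)
        ≤ (1 + (k:ℝ)^2) * ‖v t‖^2 + ‖u t‖^2 := by
    intro t
    have e1 : (inner ℝ (v t) (w t) : ℝ) = (inner ℝ (v t) (u t) : ℝ) := by
      have hw' : w t = u t + Complex.I * K * v t := by simp [hu_def]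
      rw [hw', inner_add_right]
      have : (inner ℝ (v t) (Complex.I * K * v t) : ℝ) = 0 := by
        rw [inner_mul_self_re]
        simp [hKr, Complex.mul_re]
      rw [this, add_zero]
    have e2 : (inner ℝ (u t) (-(K^2 - Complex.I*K) * u t - K^2 * v t) : ℝ)
        = -(k:ℝ)^2 * ‖u t‖^2 - (k:ℝ)^2 * (inner ℝ (u t) (v t) : ℝ) := by
      rw [inner_sub_right, inner_mul_self_re]
      have hre : (-(K^2 - Complex.I*K)).re = -(k:ℝ)^2 := by
        simp [hKr, sq, Complex.mul_re]
      have h2b : (inner ℝ (u t) (K^2 * v t) : ℝ) = (k:ℝ)^2 * (inner ℝ (u t) (v t) : ℝ) := by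
        rw [show K^2 = (((k:ℝ)^2 : ℝ):ℂ) by push_cast [hKr]; ring, inner_real_mul]
      rw [hre, h2b]
    rw [e1, e2]
    have symm : (inner ℝ (v t) (u t) : ℝ) = (inner ℝ (u t) (v t) : ℝ) := (real_inner_comm _ _).symm
    rw [symm]
    have hcs : (inner ℝ (u t) (v t) : ℝ) ≤ ‖u t‖ * ‖v t‖ := real_inner_le_norm _ _
    have hsq : 2 * ‖u t‖ * ‖v t‖ ≤ ‖u t‖^2 + ‖v t‖^2 := two_mul_le_add_sq (‖u t‖) (‖v t‖)
    have hk2 : (0:ℝ) ≤ (k:ℝ)^2 := sq_nonneg _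
    have key : (1 + (k:ℝ)^2) * (2 * (inner ℝ (u t) (v t) : ℝ))
        + 2 * (-(k:ℝ)^2 * ‖u t‖^2 - (k:ℝ)^2 * (inner ℝ (u t) (v t) : ℝ))
        = 2 * (inner ℝ (u t) (v t) : ℝ) - 2 * (k:ℝ)^2 * ‖u t‖^2 := by ring
    rw [key]
    linarith [mul_nonneg hk2 (sq_nonneg ‖v t‖), mul_nonneg hk2 (sq_nonneg ‖u t‖)]
  -- Gronwall: exp(-t) * h t is antitone
  set f : ℝ → ℝ := fun t => Real.exp (-t) * h t with hf_def
  have hf : ∀ x, HasDerivAt f (Real.exp (-x) * (((1 + (k:ℝ)^2) * (2 * (inner ℝ (v x) (w x) : ℝ))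
        + 2 * (inner ℝ (u x) (-(K^2 - Complex.I*K) * u x - K^2 * v x) : ℝ)) - h x)) x := by
    intro x
    have hexp : HasDerivAt (fun t : ℝ => Real.exp (-t)) (-Real.exp (-x)) x := by
      simpa [Function.comp_def] using (Real.hasDerivAt_exp (-x)).comp x (hasDerivAt_neg x)
    have : HasDerivAt (fun y => Real.exp (-y) * h y) _ x := hexp.mul (hh x)
    convert this using 1
    ring
  have hanti : Antitone f := by
    apply antitone_of_deriv_nonpos
    · exact fun x => (hf x).differentiableAt
    · intro x
      rw [(hf x).deriv]
      have hx : h x = (1 + (k:ℝ)^2) * ‖v x‖^2 + ‖u x‖^2 := rfl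
      have hexp : (0:ℝ) ≤ Real.exp (-x) := (Real.exp_pos _).le
      have hsub : (0:ℝ) ≤ h x - ((1 + (k:ℝ)^2) * (2 * (inner ℝ (v x) (w x) : ℝ))
        + 2 * (inner ℝ (u x) (-(K^2 - Complex.I*K) * u x - K^2 * v x) : ℝ)) := by
        rw [hx]; linarith [hd_le x]
      nlinarith [mul_nonneg hexp hsub]
  have hft : f t ≤ f 0 := hanti ht0
  have hpos0 : 0 ≤ h 0 := by
    have : (0:ℝ) ≤ (1 + (k:ℝ)^2) * ‖v 0‖^2 := by positivity
    simp only [hh_def]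
    positivity
  have hht : h t ≤ Real.exp τ * h 0 := by
    have h1 : Real.exp (-t) * h t ≤ Real.exp (-0) * h 0 := hft
    rw [neg_zero, Real.exp_zero, one_mul] at h1
    have h2 : h t ≤ Real.exp t * h 0 := by
      have := mul_le_mul_of_nonneg_left h1 (Real.exp_pos t).le
      rwa [← mul_assoc, ← Real.exp_add, add_neg_cancel, Real.exp_zero, one_mul] at this
    calc h t ≤ Real.exp t * h 0 := h2
      _ ≤ Real.exp τ * h 0 := mul_le_mul_of_nonneg_right (Real.exp_le_exp.2 htτ) hpos0
  -- relate h to the real energy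
  have hE_le : (1 + (k:ℝ)^2) * ‖v t‖^2 + ‖w t‖^2 ≤ 3 * h t := by
    have hwu : ‖w t‖ ≤ ‖u t‖ + |(k:ℝ)| * ‖v t‖ := by
      have : w t = u t + Complex.I * K * v t := by simp [hu_def]
      rw [this]
      calc ‖u t + Complex.I * K * v t‖ ≤ ‖u t‖ + ‖Complex.I * K * v t‖ := norm_add_le _ _
        _ = ‖u t‖ + |(k:ℝ)| * ‖v t‖ := by
            simp [hKr, norm_mul, Complex.norm_I, Complex.norm_real, Real.norm_eq_abs]
    have hw2 : ‖w t‖^2 ≤ 2 * ‖u t‖^2 + 2 * (k:ℝ)^2 * ‖v t‖^2 := by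
      have h1 : ‖w t‖^2 ≤ (‖u t‖ + |(k:ℝ)| * ‖v t‖)^2 := by
        apply sq_le_sq' _ hwu
        have : (0:ℝ) ≤ ‖u t‖ + |(k:ℝ)| * ‖v t‖ := by positivity
        linarith [norm_nonneg (w t)]
      have h2 : (‖u t‖ + |(k:ℝ)| * ‖v t‖)^2 ≤ 2 * ‖u t‖^2 + 2 * ((k:ℝ)) ^2 * ‖v t‖^2 := by
        have := _root_.sq_abs (k:ℝ)
        nlinarith [sq_nonneg (‖u t‖ - |(k:ℝ)| * ‖v t‖)]
      linarith
    simp only [hh_def]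
    nlinarith [sq_nonneg (‖v t‖), sq_nonneg (‖u t‖), sq_nonneg ((k:ℝ)), mul_nonneg (sq_nonneg (k:ℝ)) (sq_nonneg ‖v t‖)]
  have h0_le : h 0 ≤ 3 * ((1 + (k:ℝ)^2) * ‖v 0‖^2 + ‖w 0‖^2) := by
    have hu0 : ‖u 0‖ ≤ ‖w 0‖ + |(k:ℝ)| * ‖v 0‖ := by
      calc ‖w 0 - Complex.I * K * v 0‖ ≤ ‖w 0‖ + ‖Complex.I * K * v 0‖ := norm_sub_le _ _
        _ = ‖w 0‖ + |(k:ℝ)| * ‖v 0‖ := by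
            simp [hKr, norm_mul, Complex.norm_I, Complex.norm_real, Real.norm_eq_abs]
    have hu02 : ‖u 0‖^2 ≤ 2 * ‖w 0‖^2 + 2 * (k:ℝ)^2 * ‖v 0‖^2 := by
      have h1 : ‖u 0‖^2 ≤ (‖w 0‖ + |(k:ℝ)| * ‖v 0‖)^2 := by
        apply sq_le_sq' _ hu0
        have : (0:ℝ) ≤ ‖w 0‖ + |(k:ℝ)| * ‖v 0‖ := by positivity
        linarith [norm_nonneg (u 0)]
      have h2 : (‖w 0‖ + |(k:ℝ)| * ‖v 0‖)^2 ≤ 2 * ‖w 0‖^2 + 2 * (k:ℝ)^2 * ‖v 0‖^2 := by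
        have := _root_.sq_abs (k:ℝ)
        nlinarith [sq_nonneg (‖w 0‖ - |(k:ℝ)| * ‖v 0‖)]
      linarith
    simp only [hh_def]
    nlinarith [sq_nonneg (‖v 0‖), sq_nonneg (‖w 0‖), mul_nonneg (sq_nonneg (k:ℝ)) (sq_nonneg ‖v 0‖)]
  have hexpτ : (1:ℝ) ≤ Real.exp τ := by
    nlinarith [Real.exp_pos τ, Real.add_one_le_exp τ, Real.exp_le_exp.2 (le_refl τ)]
  calc (1 + (k:ℝ)^2) * ‖v t‖^2 + ‖w t‖^2 ≤ 3 * h t := hE_le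
    _ ≤ 3 * (Real.exp τ * h 0) := by linarith
    _ ≤ 3 * (Real.exp τ * (3 * ((1 + (k:ℝ)^2) * ‖v 0‖^2 + ‖w 0‖^2))) := by
        have := mul_le_mul_of_nonneg_left h0_le (Real.exp_pos τ).le
        linarith
    _ = 9 * Real.exp τ * ((1 + (k:ℝ)^2) * ‖v 0‖^2 + ‖w 0‖^2) := by ring


open Set

/-- **The free evolution of the structurally damped wave equation in the moving frame is
bounded on `H^{s+1}(𝕋) × H^s(𝕋)`, uniformly on bounded time intervals.**
For every `s ≥ 0` and `τ > 0` there is `C > 0` such that the solutions of the homogeneous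
mode ODEs `v_k'' + (k² - 2ik) v_k' - i k³ v_k = 0`, `v_k(0) = c k`, `v_k'(0) = d k`,
satisfy, for all `0 ≤ t ≤ τ`,
`∑_k (1+k²)^s ((1+k²)|v_k(t)|² + |v_k'(t)|²) ≤ C ∑_k (1+k²)^s ((1+k²)|c_k|² + |d_k|²)`. -/
theorem free_evolution_sobolev_bound
    (s : ℝ) (hs : 0 ≤ s) (τ : ℝ) (hτ : 0 < τ) :
    ∃ C > (0:ℝ), ∀ c d : ℤ → ℂ,
      Summable (fun k : ℤ =>
        (1 + (k:ℝ)^2) ^ s * ((1 + (k:ℝ)^2) * ‖c k‖^2 + ‖d k‖^2)) →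
      ∀ v w : ℤ → ℝ → ℂ,
        (∀ k t, HasDerivAt (v k) (w k t) t) →
        (∀ k t, HasDerivAt (w k)
          (-((k:ℂ)^2 - 2*Complex.I*(k:ℂ)) * w k t + Complex.I * (k:ℂ)^3 * v k t) t) →
        (∀ k, v k 0 = c k) → (∀ k, w k 0 = d k) →
        ∀ t ∈ Icc (0:ℝ) τ,
          Summable (fun k : ℤ =>
            (1 + (k:ℝ)^2) ^ s * ((1 + (k:ℝ)^2) * ‖v k t‖^2 + ‖w k t‖^2)) ∧
          (∑' k : ℤ, (1 + (k:ℝ)^2) ^ s * ((1 + (k:ℝ)^2) * ‖v k t‖^2 + ‖w k t‖^2))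
            ≤ C * ∑' k : ℤ, (1 + (k:ℝ)^2) ^ s * ((1 + (k:ℝ)^2) * ‖c k‖^2 + ‖d k‖^2) := by
  refine ⟨9 * Real.exp τ, by positivity, ?_⟩
  intro c d hsum v w hv hw hv0 hw0 t ht
  obtain ⟨ht0, htτ⟩ := ht
  have hmode : ∀ k : ℤ, (1 + (k:ℝ)^2) * ‖v k t‖^2 + ‖w k t‖^2
      ≤ 9 * Real.exp τ * ((1 + (k:ℝ)^2) * ‖c k‖^2 + ‖d k‖^2) := by
    intro k
    have := mode_energy_bound τ k (v k) (w k) (hv k) (hw k) t ht0 htτ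
    rwa [hv0 k, hw0 k] at this
  have hwpos : ∀ k : ℤ, (0:ℝ) ≤ (1 + (k:ℝ)^2) ^ s := fun k =>
    Real.rpow_nonneg (by positivity) s
  have hterm : ∀ k : ℤ, (1 + (k:ℝ)^2) ^ s * ((1 + (k:ℝ)^2) * ‖v k t‖^2 + ‖w k t‖^2)
      ≤ 9 * Real.exp τ * ((1 + (k:ℝ)^2) ^ s * ((1 + (k:ℝ)^2) * ‖c k‖^2 + ‖d k‖^2)) := by
    intro k
    refine le_trans (mul_le_mul_of_nonneg_left (hmode k) (hwpos k)) (le_of_eq (by ring))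
  have hFnonneg : ∀ k : ℤ,
      (0:ℝ) ≤ (1 + (k:ℝ)^2) ^ s * ((1 + (k:ℝ)^2) * ‖v k t‖^2 + ‖w k t‖^2) := by
    intro k
    have : (0:ℝ) ≤ (1 + (k:ℝ)^2) * ‖v k t‖^2 + ‖w k t‖^2 := by positivity
    exact mul_nonneg (hwpos k) this
  have hgsum : Summable (fun k : ℤ =>
      9 * Real.exp τ * ((1 + (k:ℝ)^2) ^ s * ((1 + (k:ℝ)^2) * ‖c k‖^2 + ‖d k‖^2))) :=
    hsum.mul_left _
  have hFsum : Summable (fun k : ℤ =>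
      (1 + (k:ℝ)^2) ^ s * ((1 + (k:ℝ)^2) * ‖v k t‖^2 + ‖w k t‖^2)) :=
    Summable.of_nonneg_of_le hFnonneg hterm hgsum
  refine ⟨hFsum, ?_⟩
  calc (∑' k : ℤ, (1 + (k:ℝ)^2) ^ s * ((1 + (k:ℝ)^2) * ‖v k t‖^2 + ‖w k t‖^2))
      ≤ ∑' k : ℤ, 9 * Real.exp τ * ((1 + (k:ℝ)^2) ^ s * ((1 + (k:ℝ)^2) * ‖c k‖^2 + ‖d k‖^2)) :=
        Summable.tsum_le_tsum hterm hFsum hgsum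
    _ = 9 * Real.exp τ * ∑' k : ℤ, (1 + (k:ℝ)^2) ^ s * ((1 + (k:ℝ)^2) * ‖c k‖^2 + ‖d k‖^2) :=
        tsum_mul_left
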